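/- arXiv:1505.00362 — 3 statements merged into one kernel-verified Lean document; each statement's English description precedes it below -/
import Mathlib

section
/- The Kuhn-Tucker set Z equals the intersection over all (a,a*) ∈ gra A and (b,b*) ∈ gra B of the half-spaces H_{a,b} = {(x,y*) : ⟨x, a* + L*b*⟩ + ⟨b - La, y*⟩ ≤ ⟨a,a*⟩ + ⟨b,b*⟩}. -/
open NormedSpace

/-- A set-valued operator is monotone. -/
def IsMonotoneOp (X : Type*) [NormedAddCommGroup X] [NormedSpace ℝ X]
    (A : X → Set (StrongDual ℝ X)) : Prop :=
  ∀ x₁ x₂ x₁s x₂s, x₁s ∈ A x₁ → x₂s ∈ A x₂ → 0 ≤ (x₁s - x₂s) (x₁ - x₂)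

/-- A set-valued operator is maximally monotone. -/
def IsMaxMonotoneOp (X : Type*) [NormedAddCommGroup X] [NormedSpace ℝ X]
    (A : X → Set (StrongDual ℝ X)) : Prop :=
  IsMonotoneOp X A ∧ ∀ x xs, (∀ y ys, ys ∈ A y → 0 ≤ (xs - ys) (x - y)) → xs ∈ A x

/-- The Kuhn-Tucker set `Z` equals the intersection over all
`(a,a*) ∈ gra A`, `(b,b*) ∈ gra B` of the half-spaces
`H_{a,b} = {(x,y*) : ⟨x, a* + L*b*⟩ + ⟨b - La, y*⟩ ≤ ⟨a,a*⟩ + ⟨b,b*⟩}`. -/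
theorem kuhnTucker_eq_inter_halfspaces
    (X Y : Type*) [NormedAddCommGroup X] [NormedSpace ℝ X] [CompleteSpace X]
    [NormedAddCommGroup Y] [NormedSpace ℝ Y] [CompleteSpace Y]
    (hX : Function.Surjective (NormedSpace.inclusionInDoubleDual ℝ X))
    (hY : Function.Surjective (NormedSpace.inclusionInDoubleDual ℝ Y))
    (A : X → Set (StrongDual ℝ X)) (B : Y → Set (StrongDual ℝ Y))
    (hA : IsMaxMonotoneOp X A) (hB : IsMaxMonotoneOp Y B)
    (L : X →L[ℝ] Y) :
    {p : X × StrongDual ℝ Y | -(p.2.comp L) ∈ A p.1 ∧ p.2 ∈ B (L p.1)} =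
      {p : X × StrongDual ℝ Y | ∀ a as b bs, as ∈ A a → bs ∈ B b →
        (as + bs.comp L) p.1 + p.2 (b - L a) ≤ as a + bs b} := by
  ext ⟨x, ys⟩
  simp only [Set.mem_setOf_eq]
  constructor
  · rintro ⟨h1, h2⟩ a as b bs ha hb
    have m1 := hA.1 a x as _ ha h1
    have m2 := hB.1 b (L x) bs ys hb h2
    simp only [ContinuousLinearMap.sub_apply, ContinuousLinearMap.add_apply,
      ContinuousLinearMap.neg_apply, ContinuousLinearMap.coe_comp',
      Function.comp_apply, map_sub] at m1 m2 ⊢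
    linarith
  · intro h
    -- There exists a graph point of B with nonpositive "g" value
    have hBg : ∃ b bs, bs ∈ B b ∧ bs b - bs (L x) - ys b + ys (L x) ≤ 0 := by
      by_cases hy : ys ∈ B (L x)
      · exact ⟨L x, ys, hy, by simp⟩
      · by_contra hc
        push_neg at hc
        refine hy (hB.2 (L x) ys fun b bs hb => ?_)
        have hlt := hc b bs hb
        simp only [ContinuousLinearMap.sub_apply, map_sub]
        linarith
    obtain ⟨b₀, bs₀, hb₀, hg₀⟩ := hBg
    have h1 : -(ys.comp L) ∈ A x := by
      refine hA.2 x _ fun a as ha => ?_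
      have key := h a as b₀ bs₀ ha hb₀
      simp only [ContinuousLinearMap.sub_apply, ContinuousLinearMap.add_apply,
        ContinuousLinearMap.neg_apply, ContinuousLinearMap.coe_comp',
        Function.comp_apply, map_sub] at key ⊢
      linarith
    refine ⟨h1, hB.2 (L x) ys fun b bs hb => ?_⟩
    have key := h x (-(ys.comp L)) b bs h1 hb
    simp only [ContinuousLinearMap.sub_apply, ContinuousLinearMap.add_apply,
      ContinuousLinearMap.neg_apply, ContinuousLinearMap.coe_comp',
      Function.comp_apply, map_sub] at key ⊢
    linarith
end

section
/- If (a_n, a_n*) is a sequence in gra A, (b_n, b_n*) a sequence in gra B, a_n ⇀ x weakly, b_n* ⇀ y* weakly, a_n* + L*b_n* → 0 strongly, and La_n - b_n → 0 strongly, then (x,y*) belongs to the Kuhn-Tucker set Z. -/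
open NormedSpace Filter Topology

/-- If `(aₙ,aₙ*) ∈ gra A`, `(bₙ,bₙ*) ∈ gra B`, `aₙ ⇀ x` weakly,
`bₙ* ⇀ y*` weakly, `aₙ* + L*bₙ* → 0` and `Laₙ - bₙ → 0` strongly, then the point
`(x,y*)` belongs to the Kuhn-Tucker set `Z`. -/
theorem kuhnTucker_weak_strong_closed
    (X Y : Type*) [NormedAddCommGroup X] [NormedSpace ℝ X] [CompleteSpace X]
    [NormedAddCommGroup Y] [NormedSpace ℝ Y] [CompleteSpace Y]
    (hX : Function.Surjective (NormedSpace.inclusionInDoubleDual ℝ X))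
    (hY : Function.Surjective (NormedSpace.inclusionInDoubleDual ℝ Y))
    (A : X → Set (StrongDual ℝ X)) (B : Y → Set (StrongDual ℝ Y))
    (hA : IsMaxMonotoneOp X A) (hB : IsMaxMonotoneOp Y B)
    (L : X →L[ℝ] Y)
    (a : ℕ → X) (as : ℕ → StrongDual ℝ X) (b : ℕ → Y) (bs : ℕ → StrongDual ℝ Y)
    (hga : ∀ n, as n ∈ A (a n)) (hgb : ∀ n, bs n ∈ B (b n))
    (x : X) (ys : StrongDual ℝ Y)
    (hweak_a : ∀ xs : StrongDual ℝ X, Tendsto (fun n => xs (a n)) atTop (𝓝 (xs x)))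
    (hweak_bs : ∀ Φ : StrongDual ℝ (StrongDual ℝ Y), Tendsto (fun n => Φ (bs n)) atTop (𝓝 (Φ ys)))
    (hstrong1 : Tendsto (fun n => as n + (bs n).comp L) atTop (𝓝 0))
    (hstrong2 : Tendsto (fun n => L (a n) - b n) atTop (𝓝 0)) :
    -(ys.comp L) ∈ A x ∧ ys ∈ B (L x) := by
  set xs : StrongDual ℝ X := -(ys.comp L) with hxs
  -- auxiliary: a convergent real sequence is bounded in norm
  have bdd : ∀ (f : ℕ → ℝ) (l : ℝ), Tendsto f atTop (𝓝 l) → ∃ C, ∀ n, ‖f n‖ ≤ C := by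
    intro f l hf
    obtain ⟨C, hC⟩ := hf.norm.bddAbove_range
    exact ⟨C, fun n => hC ⟨n, rfl⟩⟩
  -- weak convergence facts
  have hbsw : ∀ v : Y, Tendsto (fun n => bs n v) atTop (𝓝 (ys v)) := by
    intro v
    simpa [NormedSpace.dual_def] using hweak_bs (inclusionInDoubleDual ℝ Y v)
  have hε : Tendsto (fun n => ‖as n + (bs n).comp L‖) atTop (𝓝 0) := by
    simpa using hstrong1.norm
  have hδ : Tendsto (fun n => ‖L (a n) - b n‖) atTop (𝓝 0) := by
    simpa using hstrong2.norm
  -- boundedness of (a n) and (bs n)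
  obtain ⟨Ca, hCa⟩ : ∃ C, ∀ n, ‖a n‖ ≤ C := by
    obtain ⟨C, hC⟩ := banach_steinhaus
      (g := fun n => inclusionInDoubleDual ℝ X (a n)) (fun xs' => by
        obtain ⟨C, hC⟩ := bdd _ _ (hweak_a xs')
        exact ⟨C, fun n => by simpa [NormedSpace.dual_def] using hC n⟩)
    refine ⟨C, fun n => ?_⟩
    have : ‖inclusionInDoubleDual ℝ X (a n)‖ = ‖a n‖ :=
      (inclusionInDoubleDualLi ℝ (E := X)).norm_map (a n)
    rw [← this]; exact hC n
  obtain ⟨Cb, hCb⟩ : ∃ C, ∀ n, ‖bs n‖ ≤ C :=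
    banach_steinhaus (g := bs) (fun v => by
      obtain ⟨C, hC⟩ := bdd _ _ (hbsw v)
      exact ⟨C, fun n => hC n⟩)
  -- limit of as n at a fixed point
  have has : ∀ u : X, Tendsto (fun n => as n u) atTop (𝓝 (-(ys (L u)))) := by
    intro u
    have h1 : Tendsto (fun n => as n u + bs n (L u)) atTop (𝓝 0) := by
      apply squeeze_zero_norm (a := fun n => ‖as n + (bs n).comp L‖ * ‖u‖)
      · intro n
        have := (as n + (bs n).comp L).le_opNorm u
        simpa using this
      · simpa using hε.mul_const ‖u‖
    have := h1.sub (hbsw (L u))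
    simpa using this
  -- limit of vs (b n)
  have hbv : ∀ vs : StrongDual ℝ Y, Tendsto (fun n => vs (b n)) atTop (𝓝 (vs (L x))) := by
    intro vs
    have h1 : Tendsto (fun n => vs (L (a n))) atTop (𝓝 (vs (L x))) := by
      simpa using hweak_a (vs.comp L)
    have h2 : Tendsto (fun n => vs (L (a n) - b n)) atTop (𝓝 0) := by
      apply squeeze_zero_norm (a := fun n => ‖vs‖ * ‖L (a n) - b n‖)
      · intro n; exact vs.le_opNorm _
      · simpa using hδ.const_mul ‖vs‖
    have := h1.sub h2
    simpa [map_sub] using this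
  -- the pairing sum tends to zero
  have hsum : Tendsto (fun n => as n (a n) + bs n (b n)) atTop (𝓝 0) := by
    have hidentity : ∀ n, as n (a n) + bs n (b n)
        = (as n + (bs n).comp L) (a n) - bs n (L (a n) - b n) := by
      intro n; simp [map_sub]; ring
    apply squeeze_zero_norm
      (a := fun n => ‖as n + (bs n).comp L‖ * Ca + Cb * ‖L (a n) - b n‖)
    · intro n
      rw [hidentity n]
      calc ‖(as n + (bs n).comp L) (a n) - bs n (L (a n) - b n)‖
          ≤ ‖(as n + (bs n).comp L) (a n)‖ + ‖bs n (L (a n) - b n)‖ := norm_sub_le _ _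
        _ ≤ ‖as n + (bs n).comp L‖ * Ca + Cb * ‖L (a n) - b n‖ := by
            gcongr
            · exact ((as n + (bs n).comp L).le_opNorm (a n)).trans
                (mul_le_mul_of_nonneg_left (hCa n) (norm_nonneg _))
            · exact ((bs n).le_opNorm _).trans
                (mul_le_mul_of_nonneg_right (hCb n) (norm_nonneg _))
    · simpa using (hε.mul_const Ca).add (hδ.const_mul Cb)
  -- key inequality
  have key : ∀ u us, us ∈ A u → ∀ v vs, vs ∈ B v →
      0 ≤ (xs - us) (x - u) + (ys - vs) (L x - v) := by
    intro u us hu v vs hv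
    have hle : ∀ n, (as n u + us (a n) - us u) + (bs n v + vs (b n) - vs v)
        ≤ as n (a n) + bs n (b n) := by
      intro n
      have h1 := hA.1 (a n) u (as n) us (hga n) hu
      have h2 := hB.1 (b n) v (bs n) vs (hgb n) hv
      simp only [ContinuousLinearMap.sub_apply, map_sub] at h1 h2
      linarith
    have hrs : Tendsto (fun n => (as n u + us (a n) - us u) + (bs n v + vs (b n) - vs v))
        atTop (𝓝 ((-(ys (L u)) + us x - us u) + (ys v + vs (L x) - vs v))) :=
      (((has u).add (hweak_a us)).sub tendsto_const_nhds).add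
        (((hbsw v).add (hbv vs)).sub tendsto_const_nhds)
    have hfin := le_of_tendsto_of_tendsto' hrs hsum hle
    simp only [hxs, ContinuousLinearMap.sub_apply, ContinuousLinearMap.neg_apply,
      ContinuousLinearMap.comp_apply, map_sub] at *
    linarith
  have hyB : ys ∈ B (L x) := by
    apply hB.2
    intro v vs hv
    by_cases hxA : xs ∈ A x
    · have := key x xs hxA v vs hv
      simpa using this
    · have : ¬ ∀ u us, us ∈ A u → 0 ≤ (xs - us) (x - u) := fun h => hxA (hA.2 x xs h)
      push_neg at this
      obtain ⟨u, us, hu, hlt⟩ := this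
      have := key u us hu v vs hv
      linarith
  refine ⟨?_, hyB⟩
  apply hA.2
  intro u us hu
  have := key u us hu (L x) ys hyB
  simpa using this
end

section
/- If f : X → ]-∞,+∞] and g : Y → ]-∞,+∞] are Legendre functions, then the function F : X × Y* → ]-∞,+∞] defined by F(x,y*) = f(x) + g*(y*) is a Legendre function. -/
open NormedSpace

noncomputable section

/-- The Fenchel conjugate of `f : E → ]-∞,+∞]` (values in `EReal`). -/
def fenchelConj {E : Type*} [NormedAddCommGroup E] [NormedSpace ℝ E]
    (f : E → EReal) (xs : StrongDual ℝ E) : EReal :=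
  ⨆ x, ((xs x : EReal) - f x)

/-- The Moreau subdifferential of `f : E → ]-∞,+∞]`. -/
def subdiff {E : Type*} [NormedAddCommGroup E] [NormedSpace ℝ E]
    (f : E → EReal) (x : E) : Set (StrongDual ℝ E) :=
  {xs | ∀ y, (xs (y - x) : EReal) + f x ≤ f y}

/-- `f` is proper: never `-∞` and somewhere finite. -/
def ProperFn {E : Type*} (f : E → EReal) : Prop :=
  (∀ x, f x ≠ ⊥) ∧ ∃ x, f x ≠ ⊤

/-- Convexity of an `EReal`-valued function. -/
def ConvexFn {E : Type*} [NormedAddCommGroup E] [NormedSpace ℝ E] (f : E → EReal) : Prop :=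
  ∀ x y : E, ∀ a b : ℝ, 0 ≤ a → 0 ≤ b → a + b = 1 →
    f (a • x + b • y) ≤ (a : EReal) * f x + (b : EReal) * f y

/-- Strict convexity of `f` on a set `S`. -/
def StrictConvexFnOn {E : Type*} [NormedAddCommGroup E] [NormedSpace ℝ E]
    (f : E → EReal) (S : Set E) : Prop :=
  ∀ x ∈ S, ∀ y ∈ S, x ≠ y → ∀ a b : ℝ, 0 < a → 0 < b → a + b = 1 →
    f (a • x + b • y) < (a : EReal) * f x + (b : EReal) * f y

/-- A set-valued map is locally bounded on its domain. -/
def LocBoundedOnDom {E : Type*} [NormedAddCommGroup E] [NormedSpace ℝ E]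
    {F : Type*} [NormedAddCommGroup F] (M : E → Set F) : Prop :=
  ∀ x, (M x).Nonempty → ∃ ε > (0 : ℝ), ∃ C : ℝ, ∀ y, ‖y - x‖ < ε → ∀ ys ∈ M y, ‖ys‖ ≤ C

/-- `f` is essentially smooth: `∂f` is locally bounded and single-valued on its domain. -/
def EssSmoothFn {E : Type*} [NormedAddCommGroup E] [NormedSpace ℝ E] (f : E → EReal) : Prop :=
  LocBoundedOnDom (subdiff f) ∧ ∀ x, (subdiff f x).Subsingleton

/-- `f` is essentially strictly convex: `∂f*` is locally bounded on its domain and `f` is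
strictly convex on every convex subset of `dom ∂f`. -/
def EssStrictConvexFn {E : Type*} [NormedAddCommGroup E] [NormedSpace ℝ E]
    (f : E → EReal) : Prop :=
  LocBoundedOnDom (subdiff (fenchelConj f)) ∧
  ∀ S : Set E, S ⊆ {x | (subdiff f x).Nonempty} → Convex ℝ S → StrictConvexFnOn f S

/-- A Legendre function: proper, lower semicontinuous, convex, essentially smooth and
essentially strictly convex. -/
def IsLegendreFn {E : Type*} [NormedAddCommGroup E] [NormedSpace ℝ E] (f : E → EReal) : Prop :=
  ProperFn f ∧ LowerSemicontinuous f ∧ ConvexFn f ∧ EssSmoothFn f ∧ EssStrictConvexFn f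

namespace LegAux
set_option linter.unusedSectionVars false

variable {E : Type*} [NormedAddCommGroup E] [NormedSpace ℝ E]

lemma ereal_real {a : EReal} (h1 : a ≠ ⊥) (h2 : a ≠ ⊤) : ∃ r : ℝ, a = (r : EReal) :=
  ⟨a.toReal, (EReal.coe_toReal h2 h1).symm⟩

lemma ereal_cases (a : EReal) : a = ⊥ ∨ a = ⊤ ∨ ∃ r : ℝ, a = (r : EReal) := by
  induction a using EReal.rec with
  | bot => exact Or.inl rfl
  | top => exact Or.inr (Or.inl rfl)
  | coe r => exact Or.inr (Or.inr ⟨r, rfl⟩)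

lemma le_fenchelConj (g : E → EReal) (z : StrongDual ℝ E) (x : E) :
    (z x : EReal) - g x ≤ fenchelConj g z := le_iSup (fun x => (z x : EReal) - g x) x

lemma fenchelConj_le {g : E → EReal} {z : StrongDual ℝ E} {c : EReal}
    (h : ∀ x, (z x : EReal) - g x ≤ c) : fenchelConj g z ≤ c := iSup_le h

/-- If the subdifferential is nonempty at `x` and `f` is proper, then `f x` is real. -/
lemma subdiff_real {f : E → EReal} (hf : ProperFn f) {x : E}
    (hx : (subdiff f x).Nonempty) : ∃ r : ℝ, f x = (r : EReal) := by
  obtain ⟨ψ, hψ⟩ := hx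
  obtain ⟨x₀, hx₀⟩ := hf.2
  refine ereal_real (hf.1 x) ?_
  intro h
  have h1 := hψ x₀
  rw [h, EReal.add_top_of_ne_bot (EReal.coe_ne_bot _)] at h1
  exact hx₀ (top_le_iff.mp h1)

lemma ereal_mul_mono {a : ℝ} (ha : 0 ≤ a) {u v : EReal} (h : u ≤ v) :
    (a : EReal) * u ≤ (a : EReal) * v := by
  rcases eq_or_lt_of_le ha with rfl | ha'
  · simp
  · induction v using EReal.rec with
    | top => rw [EReal.coe_mul_top_of_pos ha']; exact le_top
    | bot => rw [le_bot_iff] at h; rw [h]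
    | coe t =>
      induction u using EReal.rec with
      | bot => rw [EReal.coe_mul_bot_of_pos ha']; exact bot_le
      | top => exact absurd h (by simp)
      | coe s =>
        rw [← EReal.coe_mul, ← EReal.coe_mul, EReal.coe_le_coe_iff]
        exact mul_le_mul_of_nonneg_left (by exact_mod_cast h) ha

lemma ereal_mul_add {a : ℝ} (ha : 0 ≤ a) {u v : EReal} (hu : u ≠ ⊥) (hv : v ≠ ⊥) :
    (a : EReal) * (u + v) = (a : EReal) * u + (a : EReal) * v := by
  rcases eq_or_lt_of_le ha with rfl | ha'
  · simp
  · induction u using EReal.rec with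
    | bot => exact absurd rfl hu
    | top =>
      rw [EReal.top_add_of_ne_bot hv, EReal.coe_mul_top_of_pos ha',
        EReal.top_add_of_ne_bot]
      induction v using EReal.rec with
      | bot => exact absurd rfl hv
      | top => rw [EReal.coe_mul_top_of_pos ha']; exact top_ne_bot
      | coe t => rw [← EReal.coe_mul]; exact EReal.coe_ne_bot _
    | coe s =>
      induction v using EReal.rec with
      | bot => exact absurd rfl hv
      | top =>
        rw [EReal.add_top_of_ne_bot (EReal.coe_ne_bot s), EReal.coe_mul_top_of_pos ha',
          ← EReal.coe_mul, EReal.add_top_of_ne_bot (EReal.coe_ne_bot _)]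
      | coe t => norm_cast; ring

/-- Reduction of convexity to the positive-coefficients case. -/
lemma convexFn_of_pos {f : E → EReal}
    (h : ∀ x y : E, ∀ a b : ℝ, 0 < a → 0 < b → a + b = 1 →
      f (a • x + b • y) ≤ (a : EReal) * f x + (b : EReal) * f y) : ConvexFn f := by
  intro x y a b ha hb hab
  rcases eq_or_lt_of_le ha with rfl | ha'
  · have hb1 : b = 1 := by linarith
    subst hb1; simp
  · rcases eq_or_lt_of_le hb with rfl | hb'
    · have ha1 : a = 1 := by linarith
      subst ha1; simp
    · exact h x y a b ha' hb' hab

lemma fenchelConj_convex {g : E → EReal} (hbot : ∀ x, g x ≠ ⊥) :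
    ConvexFn (fenchelConj g) := by
  apply convexFn_of_pos
  intro z₁ z₂ a b ha hb hab
  apply fenchelConj_le
  intro x
  rcases ereal_cases (g x) with hgx | hgx | ⟨r, hgx⟩
  · exact absurd hgx (hbot x)
  · rw [hgx, EReal.sub_top]; exact bot_le
  · rw [hgx]
    have key : ((a • z₁ + b • z₂ : StrongDual ℝ E) x : EReal) - (r : EReal)
        = (a : EReal) * ((z₁ x : EReal) - (r : EReal)) + (b : EReal) * ((z₂ x : EReal) - (r : EReal)) := by
      rw [← EReal.coe_sub, ← EReal.coe_sub, ← EReal.coe_sub, ← EReal.coe_mul, ← EReal.coe_mul,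
        ← EReal.coe_add, EReal.coe_eq_coe_iff]
      simp only [ContinuousLinearMap.add_apply, ContinuousLinearMap.coe_smul',
        Pi.smul_apply, smul_eq_mul]
      have : a * r + b * r = r := by rw [← add_mul, hab, one_mul]
      linarith
    rw [key]
    refine add_le_add (ereal_mul_mono ha.le ?_) (ereal_mul_mono hb.le ?_)
    · have := le_fenchelConj g z₁ x; rwa [hgx] at this
    · have := le_fenchelConj g z₂ x; rwa [hgx] at this

lemma fenchelConj_lsc (g : E → EReal) : LowerSemicontinuous (fenchelConj g) := by
  apply lowerSemicontinuous_iSup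
  intro x
  rcases ereal_cases (g x) with hgx | hgx | ⟨r, hgx⟩
  · have : (fun z : StrongDual ℝ E => (z x : EReal) - g x) = fun _ => ⊤ := by
      funext z; rw [hgx]; rw [sub_eq_add_neg, EReal.neg_bot, EReal.add_top_of_ne_bot (EReal.coe_ne_bot _)]
    rw [this]; exact lowerSemicontinuous_const
  · have : (fun z : StrongDual ℝ E => (z x : EReal) - g x) = fun _ => ⊥ := by
      funext z; rw [hgx, EReal.sub_top]
    rw [this]; exact lowerSemicontinuous_const
  · have : (fun z : StrongDual ℝ E => (z x : EReal) - g x) = fun z => ((z x - r : ℝ) : EReal) := by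
      funext z; rw [hgx, EReal.coe_sub]
    rw [this]
    apply Continuous.lowerSemicontinuous
    exact continuous_coe_real_ereal.comp ((ContinuousLinearMap.apply ℝ ℝ x).continuous.sub continuous_const)

def epiSet (g : E → EReal) : Set (E × ℝ) := {p | g p.1 ≤ (p.2 : EReal)}

lemma epi_closed {g : E → EReal} (hg : LowerSemicontinuous g) : IsClosed (epiSet g) := by
  rw [← isOpen_compl_iff, isOpen_iff_mem_nhds]
  rintro ⟨y, t⟩ h
  simp only [epiSet, Set.mem_compl_iff, Set.mem_setOf_eq, not_le] at h
  obtain ⟨c, htc, hcg⟩ := EReal.exists_between_coe_real h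
  have hy : ∀ᶠ x in nhds y, (c : EReal) < g x := hg y _ hcg
  have htc' : t < c := by exact_mod_cast htc
  have ht : ∀ᶠ s : ℝ in nhds t, s < c := Iio_mem_nhds htc'
  filter_upwards [hy.prod_nhds ht]
  rintro ⟨x, sv⟩ ⟨hgx, hsv⟩
  simp only [epiSet, Set.mem_compl_iff, Set.mem_setOf_eq, not_le]
  exact lt_trans (by exact_mod_cast hsv) hgx

lemma epi_convex {g : E → EReal} (hconv : ConvexFn g) : Convex ℝ (epiSet g) := by
  rintro ⟨y₁, t₁⟩ h₁ ⟨y₂, t₂⟩ h₂ a b ha hb hab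
  simp only [epiSet, Set.mem_setOf_eq] at h₁ h₂ ⊢
  simp only [Prod.smul_fst, Prod.smul_snd, Prod.fst_add, Prod.snd_add, smul_eq_mul]
  calc g (a • y₁ + b • y₂) ≤ (a : EReal) * g y₁ + (b : EReal) * g y₂ := hconv y₁ y₂ a b ha hb hab
    _ ≤ ((a * t₁ : ℝ) : EReal) + ((b * t₂ : ℝ) : EReal) := by
        refine add_le_add ?_ ?_
        · rw [EReal.coe_mul]; exact ereal_mul_mono ha h₁
        · rw [EReal.coe_mul]; exact ereal_mul_mono hb h₂
    _ = ((a * t₁ + b * t₂ : ℝ) : EReal) := by rw [EReal.coe_add]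

lemma epi_separation {g : E → EReal} (hprop : ProperFn g) (hlsc : LowerSemicontinuous g)
    (hconv : ConvexFn g) {p : E × ℝ} (hp : p ∉ epiSet g) :
    ∃ (l : StrongDual ℝ E) (s u : ℝ), s ≤ 0 ∧ (∀ q ∈ epiSet g, l q.1 + q.2 * s < u) ∧
      u < l p.1 + p.2 * s := by
  obtain ⟨L, u, hLs, hLp⟩ :=
    geometric_hahn_banach_closed_point (epi_convex hconv) (epi_closed hlsc) hp
  set l : StrongDual ℝ E := L.comp (ContinuousLinearMap.inl ℝ E ℝ) with hl
  set s : ℝ := L (0, 1) with hs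
  have hL : ∀ q : E × ℝ, L q = l q.1 + q.2 * s := by
    rintro ⟨y, t⟩
    have hyt : (y, t) = (y, (0:ℝ)) + t • ((0:E), (1:ℝ)) := by
      simp [Prod.ext_iff]
    show L (y, t) = l y + t * s
    rw [hyt, map_add, map_smul, smul_eq_mul]
    rfl
  have hs0 : s ≤ 0 := by
    by_contra hs'
    push_neg at hs'
    obtain ⟨y₀, hy₀⟩ := hprop.2
    obtain ⟨r₀, hr₀⟩ := ereal_real (hprop.1 y₀) hy₀
    set T := max r₀ ((u - l y₀)/s) with hT
    have hepi : (y₀, T) ∈ epiSet g := by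
      simp only [epiSet, Set.mem_setOf_eq]
      rw [hr₀]
      exact_mod_cast le_max_left _ _
    have h1 := hLs _ hepi
    rw [hL] at h1
    have h2 : (u - l y₀)/s ≤ T := le_max_right _ _
    rw [div_le_iff₀ hs'] at h2
    simp only at h1
    linarith
  exact ⟨l, s, u, hs0, fun q hq => by rw [← hL]; exact hLs q hq, by rw [← hL]; exact hLp⟩

lemma sep_minorant {g : E → EReal} (hprop : ProperFn g) {l : StrongDual ℝ E} {s u : ℝ}
    (hsneg : s < 0) (hsep : ∀ q ∈ epiSet g, l q.1 + q.2 * s < u) :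
    ∀ w, ((((-s)⁻¹ • l : StrongDual ℝ E) w - u/(-s) : ℝ) : EReal) ≤ g w := by
  intro w
  have hpos : 0 < -s := by linarith
  rcases ereal_cases (g w) with hb | ht | ⟨r, hr⟩
  · exact absurd hb (hprop.1 w)
  · rw [ht]; exact le_top
  · rw [hr, EReal.coe_le_coe_iff]
    have h1 := hsep (w, r) (by simp only [epiSet, Set.mem_setOf_eq, hr]; exact le_rfl)
    simp only at h1
    simp only [ContinuousLinearMap.smul_apply, smul_eq_mul]
    rw [inv_mul_eq_div, div_sub_div_same, div_le_iff₀ hpos]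
    nlinarith
lemma exists_minorant {g : E → EReal} (hprop : ProperFn g) (hlsc : LowerSemicontinuous g)
    (hconv : ConvexFn g) : ∃ (z : StrongDual ℝ E) (m : ℝ), ∀ y, ((z y - m : ℝ) : EReal) ≤ g y := by
  obtain ⟨y₀, hy₀⟩ := hprop.2
  obtain ⟨r₀, hr₀⟩ := ereal_real (hprop.1 y₀) hy₀
  have hp : (y₀, r₀ - 1) ∉ epiSet g := by
    simp only [epiSet, Set.mem_setOf_eq, hr₀, not_le, EReal.coe_lt_coe_iff]
    linarith
  obtain ⟨l, s, u, hs0, hsep, hpt⟩ := epi_separation hprop hlsc hconv hp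
  have hsneg : s < 0 := by
    rcases lt_or_eq_of_le hs0 with h | h
    · exact h
    · exfalso
      have h1 := hsep (y₀, r₀) (by simp only [epiSet, Set.mem_setOf_eq, hr₀]; exact le_rfl)
      simp only [← h, mul_zero] at h1 hpt
      linarith
  exact ⟨(-s)⁻¹ • l, u/(-s), sep_minorant hprop hsneg hsep⟩

lemma fenchelConj_ne_bot {g : E → EReal} (hprop : ProperFn g) (z : StrongDual ℝ E) :
    fenchelConj g z ≠ ⊥ := by
  obtain ⟨y₀, hy₀⟩ := hprop.2
  obtain ⟨r₀, hr₀⟩ := ereal_real (hprop.1 y₀) hy₀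
  have h1 := le_fenchelConj g z y₀
  rw [hr₀, ← EReal.coe_sub] at h1
  intro h
  rw [h, le_bot_iff] at h1
  exact EReal.coe_ne_bot _ h1

lemma fenchelConj_le_of_minorant {g : E → EReal} (hprop : ProperFn g) {z : StrongDual ℝ E} {m : ℝ}
    (hmin : ∀ y, ((z y - m : ℝ) : EReal) ≤ g y) : fenchelConj g z ≤ (m : EReal) := by
  apply fenchelConj_le
  intro x
  rcases ereal_cases (g x) with hb | ht | ⟨r, hr⟩
  · exact absurd hb (hprop.1 x)
  · rw [ht, EReal.sub_top]; exact bot_le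
  · have h1 := hmin x
    rw [hr, EReal.coe_le_coe_iff] at h1
    rw [hr, ← EReal.coe_sub, EReal.coe_le_coe_iff]
    linarith

lemma fenchelConj_proper {g : E → EReal} (hprop : ProperFn g) (hlsc : LowerSemicontinuous g)
    (hconv : ConvexFn g) : ProperFn (fenchelConj g) := by
  refine ⟨fenchelConj_ne_bot hprop, ?_⟩
  obtain ⟨z, m, hmin⟩ := exists_minorant hprop hlsc hconv
  refine ⟨z, fun h => ?_⟩
  have := fenchelConj_le_of_minorant hprop hmin
  rw [h, top_le_iff] at this
  exact EReal.coe_ne_top _ this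

/-- Fenchel–Moreau: the biconjugate of a proper lsc convex function agrees with it. -/
lemma biconj {g : E → EReal} (hprop : ProperFn g) (hlsc : LowerSemicontinuous g)
    (hconv : ConvexFn g) (y : E) :
    fenchelConj (fenchelConj g) (inclusionInDoubleDual ℝ E y) = g y := by
  have happ : ∀ z : StrongDual ℝ E, (inclusionInDoubleDual ℝ E y) z = z y := fun z => rfl
  apply le_antisymm
  · apply fenchelConj_le
    intro z
    rw [happ]
    rcases ereal_cases (g y) with hb | ht | ⟨r, hr⟩
    · exact absurd hb (hprop.1 y)
    · rw [ht]; exact le_top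
    · have h1 := le_fenchelConj g z y
      rw [hr, ← EReal.coe_sub] at h1
      rcases ereal_cases (fenchelConj g z) with hb' | ht' | ⟨s, hs'⟩
      · rw [hb', le_bot_iff] at h1; exact absurd h1 (EReal.coe_ne_bot _)
      · rw [ht', EReal.sub_top, hr]; exact bot_le
      · rw [hs', hr, ← EReal.coe_sub, EReal.coe_le_coe_iff]
        rw [hs', EReal.coe_le_coe_iff] at h1
        linarith
  · refine EReal.ge_of_forall_gt_iff_ge.mp (fun r hr => ?_)
    have hp : (y, r) ∉ epiSet g := by
      simp only [epiSet, Set.mem_setOf_eq, not_le]; exact hr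
    obtain ⟨l, s, u, hs0, hsep, hpt⟩ := epi_separation hprop hlsc hconv hp
    simp only at hpt
    rcases lt_or_eq_of_le hs0 with hneg | hzero
    · have hpos : 0 < -s := by linarith
      set z : StrongDual ℝ E := (-s)⁻¹ • l with hz
      set m : ℝ := u/(-s) with hm
      have hmin : ∀ w, ((z w - m : ℝ) : EReal) ≤ g w := sep_minorant hprop hneg hsep
      have h2 : fenchelConj g z ≤ (m : EReal) := fenchelConj_le_of_minorant hprop hmin
      have h3 : r < z y - m := by
        have : z y = (-s)⁻¹ * l y := by
          simp only [hz, ContinuousLinearMap.smul_apply, smul_eq_mul]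
        rw [this, hm, inv_mul_eq_div, div_sub_div_same]
        rw [lt_div_iff₀ hpos]
        nlinarith
      calc (r : EReal) ≤ ((z y - m : ℝ) : EReal) := by exact_mod_cast h3.le
        _ = (z y : EReal) - (m : EReal) := EReal.coe_sub _ _
        _ ≤ (z y : EReal) - fenchelConj g z := EReal.sub_le_sub le_rfl h2
        _ ≤ fenchelConj (fenchelConj g) (inclusionInDoubleDual ℝ E y) := by
            rw [← happ z]; exact le_fenchelConj _ _ z
    · obtain ⟨z₀, m₀, hmin₀⟩ := exists_minorant hprop hlsc hconv
      have hly : u < l y := by rw [hzero, mul_zero] at hpt; linarith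
      set d : ℝ := l y - u with hd
      have hd0 : 0 < d := by rw [hd]; linarith
      set c : ℝ := max 0 ((r - z₀ y + m₀)/d) with hc
      have hc0 : 0 ≤ c := le_max_left _ _
      set z : StrongDual ℝ E := z₀ + c • l with hz
      have hzapp : ∀ w, z w = z₀ w + c * l w := by
        intro w
        simp only [hz, ContinuousLinearMap.add_apply, ContinuousLinearMap.smul_apply, smul_eq_mul]
      have hzc : fenchelConj g z ≤ ((m₀ + c * u : ℝ) : EReal) := by
        apply fenchelConj_le
        intro x
        rcases ereal_cases (g x) with hb | ht | ⟨ρ, hρ⟩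
        · exact absurd hb (hprop.1 x)
        · rw [ht, EReal.sub_top]; exact bot_le
        · have h5 := hsep (x, ρ) (by simp only [epiSet, Set.mem_setOf_eq, hρ]; exact le_rfl)
          rw [hzero, mul_zero] at h5
          simp only at h5
          have h6 := hmin₀ x
          rw [hρ, EReal.coe_le_coe_iff] at h6
          rw [hρ, ← EReal.coe_sub, EReal.coe_le_coe_iff, hzapp]
          nlinarith [mul_le_mul_of_nonneg_left h5.le hc0]
      have h4 : r ≤ z y - (m₀ + c * u) := by
        have h7 : (r - z₀ y + m₀)/d ≤ c := le_max_right _ _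
        rw [div_le_iff₀ hd0] at h7
        rw [hzapp]
        nlinarith
      calc (r : EReal) ≤ ((z y - (m₀ + c * u) : ℝ) : EReal) := by exact_mod_cast h4
        _ = (z y : EReal) - ((m₀ + c * u : ℝ) : EReal) := EReal.coe_sub _ _
        _ ≤ (z y : EReal) - fenchelConj g z := EReal.sub_le_sub le_rfl hzc
        _ ≤ fenchelConj (fenchelConj g) (inclusionInDoubleDual ℝ E y) := by
            rw [← happ z]; exact le_fenchelConj _ _ z
/-- Fenchel–Young equality from a subgradient. -/
lemma fenchelConj_of_subdiff {g : E → EReal} {x : E} {z : StrongDual ℝ E} (hz : z ∈ subdiff g x)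
    {r : ℝ} (hr : g x = (r : EReal)) : fenchelConj g z = ((z x - r : ℝ) : EReal) := by
  apply le_antisymm
  · apply fenchelConj_le
    intro w
    have h := hz w
    rw [hr] at h
    rcases ereal_cases (g w) with hb | ht | ⟨ρ, hρ⟩
    · rw [hb, le_bot_iff, ← EReal.coe_add] at h
      exact absurd h (EReal.coe_ne_bot _)
    · rw [ht, EReal.sub_top]; exact bot_le
    · rw [hρ, ← EReal.coe_add, EReal.coe_le_coe_iff, map_sub] at h
      rw [hρ, ← EReal.coe_sub, EReal.coe_le_coe_iff]
      linarith
  · have h := le_fenchelConj g z x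
    rw [hr, ← EReal.coe_sub] at h
    exact h

lemma mem_subdiff_of_conj_le {g : E → EReal} (hbot : ∀ w, g w ≠ ⊥) {x : E} {z : StrongDual ℝ E}
    {r : ℝ} (hr : g x = (r : EReal))
    (h : fenchelConj g z ≤ ((z x - r : ℝ) : EReal)) : z ∈ subdiff g x := by
  intro w
  have h2 := (le_fenchelConj g z w).trans h
  rw [hr]
  rcases ereal_cases (g w) with hb | ht | ⟨ρ, hρ⟩
  · exact absurd hb (hbot w)
  · rw [ht]; exact le_top
  · rw [hρ] at h2 ⊢
    rw [← EReal.coe_sub, EReal.coe_le_coe_iff] at h2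
    rw [← EReal.coe_add, EReal.coe_le_coe_iff, map_sub]
    linarith

/-- The subdifferential correspondence `∂g* ∋ ι y ↔ ∂g ∋ z`. -/
lemma inclusion_mem_subdiff_conj_iff {g : E → EReal} (hprop : ProperFn g)
    (hlsc : LowerSemicontinuous g) (hconv : ConvexFn g) {y : E} {z : StrongDual ℝ E} :
    inclusionInDoubleDual ℝ E y ∈ subdiff (fenchelConj g) z ↔ z ∈ subdiff g y := by
  have hcprop := fenchelConj_proper hprop hlsc hconv
  have happ : ∀ (w : E) (ξ : StrongDual ℝ E), (inclusionInDoubleDual ℝ E w) ξ = ξ w :=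
    fun _ _ => rfl
  constructor
  · intro h
    obtain ⟨s, hs⟩ := subdiff_real hcprop ⟨_, h⟩
    have hky := biconj hprop hlsc hconv y
    have hup : fenchelConj (fenchelConj g) (inclusionInDoubleDual ℝ E y)
        ≤ ((z y - s : ℝ) : EReal) := by
      apply fenchelConj_le
      intro w
      have h1 := h w
      rw [hs, map_sub, happ, happ] at h1
      rcases ereal_cases (fenchelConj g w) with hb | ht | ⟨t, htr⟩
      · exact absurd hb (hcprop.1 w)
      · rw [ht, EReal.sub_top]; exact bot_le
      · rw [htr, ← EReal.coe_add, EReal.coe_le_coe_iff] at h1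
        rw [htr, happ, ← EReal.coe_sub, EReal.coe_le_coe_iff]
        linarith
    rw [hky] at hup
    rcases ereal_cases (g y) with hb | ht | ⟨ρ, hρ⟩
    · exact absurd hb (hprop.1 y)
    · rw [ht, top_le_iff] at hup; exact absurd hup (EReal.coe_ne_top _)
    · rw [hρ, EReal.coe_le_coe_iff] at hup
      have hlow := le_fenchelConj g z y
      rw [hρ, hs, ← EReal.coe_sub, EReal.coe_le_coe_iff] at hlow
      refine mem_subdiff_of_conj_le hprop.1 hρ ?_
      rw [hs, EReal.coe_le_coe_iff]
      linarith
  · intro h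
    obtain ⟨r, hrr⟩ := subdiff_real hprop ⟨z, h⟩
    have hFY := fenchelConj_of_subdiff h hrr
    intro w
    rw [hFY, map_sub, happ, happ]
    have h2 := le_fenchelConj g w y
    rw [hrr, ← EReal.coe_sub] at h2
    have heq : ((w y - z y : ℝ) : EReal) + ((z y - r : ℝ) : EReal) = ((w y - r : ℝ) : EReal) := by
      rw [← EReal.coe_add]; norm_num
    rw [heq]
    exact h2

/-- A common subgradient at two points is a subgradient along the segment, where the function
is affine. -/
lemma subdiff_segment {g : E → EReal} (hprop : ProperFn g) (hconv : ConvexFn g)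
    {y₁ y₂ : E} {z : StrongDual ℝ E} (h₁ : z ∈ subdiff g y₁) (h₂ : z ∈ subdiff g y₂)
    {r₁ r₂ : ℝ} (hr₁ : g y₁ = (r₁ : EReal)) (hr₂ : g y₂ = (r₂ : EReal))
    {a b : ℝ} (ha : 0 ≤ a) (hb : 0 ≤ b) (hab : a + b = 1) :
    z ∈ subdiff g (a • y₁ + b • y₂) ∧
      g (a • y₁ + b • y₂) = ((a * r₁ + b * r₂ : ℝ) : EReal) := by
  set w := a • y₁ + b • y₂ with hw
  have hup : g w ≤ ((a * r₁ + b * r₂ : ℝ) : EReal) := by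
    have h3 := hconv y₁ y₂ a b ha hb hab
    rw [hr₁, hr₂, ← EReal.coe_mul, ← EReal.coe_mul, ← EReal.coe_add] at h3
    exact h3
  have hsplit : ∀ v : E, a • (v - y₁) + b • (v - y₂) = v - w := by
    intro v
    have : a • (v - y₁) + b • (v - y₂) = (a + b) • v - (a • y₁ + b • y₂) := by module
    rw [this, hab, one_smul, hw]
  have hzsplit : ∀ v : E, z (v - w) = a * z (v - y₁) + b * z (v - y₂) := by
    intro v
    rw [← hsplit v, map_add, map_smul, map_smul, smul_eq_mul, smul_eq_mul]
  have hρex : ∃ ρ : ℝ, g w = (ρ : EReal) := by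
    refine ereal_real (hprop.1 w) (fun htop => ?_)
    rw [htop, top_le_iff] at hup
    exact EReal.coe_ne_top _ hup
  obtain ⟨ρ, hρ⟩ := hρex
  have hρle : ρ ≤ a * r₁ + b * r₂ := by
    rw [hρ, EReal.coe_le_coe_iff] at hup; exact hup
  have e₁ : z (w - y₁) + r₁ ≤ ρ := by
    have h4 := h₁ w
    rw [hr₁, hρ, ← EReal.coe_add, EReal.coe_le_coe_iff] at h4
    exact h4
  have e₂ : z (w - y₂) + r₂ ≤ ρ := by
    have h4 := h₂ w
    rw [hr₂, hρ, ← EReal.coe_add, EReal.coe_le_coe_iff] at h4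
    exact h4
  have key : a * z (w - y₁) + b * z (w - y₂) = 0 := by
    rw [← hzsplit w, sub_self, map_zero]
  have hρeq : ρ = a * r₁ + b * r₂ := by
    have m₁ := mul_le_mul_of_nonneg_left e₁ ha
    have m₂ := mul_le_mul_of_nonneg_left e₂ hb
    have hsum : a * ρ + b * ρ = ρ := by rw [← add_mul, hab, one_mul]
    nlinarith
  refine ⟨?_, by rw [hρ, hρeq]⟩
  intro v
  rw [hρ]
  rcases ereal_cases (g v) with hbv | htv | ⟨t, htv⟩
  · exact absurd hbv (hprop.1 v)
  · rw [htv]; exact le_top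
  · have f₁ := h₁ v
    have f₂ := h₂ v
    rw [hr₁, htv, ← EReal.coe_add, EReal.coe_le_coe_iff] at f₁
    rw [hr₂, htv, ← EReal.coe_add, EReal.coe_le_coe_iff] at f₂
    rw [htv, ← EReal.coe_add, EReal.coe_le_coe_iff, hzsplit v]
    have m₁ := mul_le_mul_of_nonneg_left f₁ ha
    have m₂ := mul_le_mul_of_nonneg_left f₂ hb
    have hsum : a * t + b * t = t := by rw [← add_mul, hab, one_mul]
    nlinarith

/-- Essential strict convexity of `g` makes `∂g*` single-valued (in a reflexive space). -/
lemma subdiff_conj_subsingleton {g : E → EReal} (hprop : ProperFn g)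
    (hlsc : LowerSemicontinuous g) (hconv : ConvexFn g)
    (hsurj : Function.Surjective (inclusionInDoubleDual ℝ E))
    (hstrict : ∀ S : Set E, S ⊆ {x | (subdiff g x).Nonempty} → Convex ℝ S →
      StrictConvexFnOn g S) :
    ∀ z, (subdiff (fenchelConj g) z).Subsingleton := by
  intro z φ₁ hφ₁ φ₂ hφ₂
  obtain ⟨y₁, rfl⟩ := hsurj φ₁
  obtain ⟨y₂, rfl⟩ := hsurj φ₂
  have h₁ : z ∈ subdiff g y₁ := (inclusion_mem_subdiff_conj_iff hprop hlsc hconv).mp hφ₁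
  have h₂ : z ∈ subdiff g y₂ := (inclusion_mem_subdiff_conj_iff hprop hlsc hconv).mp hφ₂
  by_contra hne
  have hyne : y₁ ≠ y₂ := fun h => hne (by rw [h])
  obtain ⟨r₁, hr₁⟩ := subdiff_real hprop ⟨z, h₁⟩
  obtain ⟨r₂, hr₂⟩ := subdiff_real hprop ⟨z, h₂⟩
  have hseg : segment ℝ y₁ y₂ ⊆ {x | (subdiff g x).Nonempty} := by
    rintro p ⟨a, b, ha, hb, hab, rfl⟩
    exact ⟨z, (subdiff_segment hprop hconv h₁ h₂ hr₁ hr₂ ha hb hab).1⟩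
  have hs := hstrict (segment ℝ y₁ y₂) hseg (convex_segment _ _)
  have hmid := hs y₁ (left_mem_segment ℝ y₁ y₂) y₂ (right_mem_segment ℝ y₁ y₂) hyne
    (1/2) (1/2) (by norm_num) (by norm_num) (by norm_num)
  have heq := (subdiff_segment hprop hconv h₁ h₂ hr₁ hr₂
    (by norm_num : (0:ℝ) ≤ 1/2) (by norm_num : (0:ℝ) ≤ 1/2) (by norm_num)).2
  rw [heq, hr₁, hr₂, ← EReal.coe_mul, ← EReal.coe_mul, ← EReal.coe_add,
    EReal.coe_lt_coe_iff] at hmid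
  exact lt_irrefl _ hmid

/-- Essential smoothness of `g` makes `g*` strictly convex on convex subsets of `dom ∂g*`. -/
lemma conj_strictConvexOn {g : E → EReal} (hprop : ProperFn g)
    (hlsc : LowerSemicontinuous g) (hconv : ConvexFn g)
    (hsurj : Function.Surjective (inclusionInDoubleDual ℝ E))
    (hsmooth : ∀ x, (subdiff g x).Subsingleton) :
    ∀ S : Set (StrongDual ℝ E), S ⊆ {zz | (subdiff (fenchelConj g) zz).Nonempty} → Convex ℝ S →
      StrictConvexFnOn (fenchelConj g) S := by
  intro S hS hSc x₂ hx₂ y₂ hy₂ hne a b ha hb hab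
  have hcprop := fenchelConj_proper hprop hlsc hconv
  have happ : ∀ (w : E) (ξ : StrongDual ℝ E), (inclusionInDoubleDual ℝ E w) ξ = ξ w :=
    fun _ _ => rfl
  obtain ⟨s₁, hs₁⟩ := subdiff_real hcprop (hS hx₂)
  obtain ⟨s₂, hs₂⟩ := subdiff_real hcprop (hS hy₂)
  have hzS : a • x₂ + b • y₂ ∈ S := hSc hx₂ hy₂ ha.le hb.le hab
  obtain ⟨s₃, hs₃⟩ := subdiff_real hcprop (hS hzS)
  have hconvc := fenchelConj_convex hprop.1 x₂ y₂ a b ha.le hb.le hab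
  rw [hs₁, hs₂, hs₃, ← EReal.coe_mul, ← EReal.coe_mul, ← EReal.coe_add,
    EReal.coe_le_coe_iff] at hconvc
  rw [hs₁, hs₂, hs₃, ← EReal.coe_mul, ← EReal.coe_mul, ← EReal.coe_add,
    EReal.coe_lt_coe_iff]
  by_contra hlt
  push_neg at hlt
  have hs₃eq : s₃ = a * s₁ + b * s₂ := le_antisymm hconvc hlt
  obtain ⟨Θ, hΘ⟩ := hS hzS
  obtain ⟨u, rfl⟩ := hsurj Θ
  set zc := a • x₂ + b • y₂ with hzc
  have hA := hΘ x₂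
  have hB := hΘ y₂
  rw [hs₃, hs₁, map_sub, happ, happ, ← EReal.coe_add, EReal.coe_le_coe_iff] at hA
  rw [hs₃, hs₂, map_sub, happ, happ, ← EReal.coe_add, EReal.coe_le_coe_iff] at hB
  have hzero : a * (x₂ u - zc u) + b * (y₂ u - zc u) = 0 := by
    have : zc u = a * x₂ u + b * y₂ u := by
      rw [hzc]
      simp only [ContinuousLinearMap.add_apply, ContinuousLinearMap.coe_smul', Pi.smul_apply,
        smul_eq_mul]
    have hsum : a * zc u + b * zc u = zc u := by rw [← add_mul, hab, one_mul]
    nlinarith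
  have hsum3 : a * s₃ + b * s₃ = s₃ := by rw [← add_mul, hab, one_mul]
  have hAeq : x₂ u - zc u + s₃ = s₁ := by
    by_contra hne'
    have hlt' := mul_lt_mul_of_pos_left (lt_of_le_of_ne hA hne') ha
    have m₂ := mul_le_mul_of_nonneg_left hB hb.le
    nlinarith
  have hBeq : y₂ u - zc u + s₃ = s₂ := by
    by_contra hne'
    have hlt' := mul_lt_mul_of_pos_left (lt_of_le_of_ne hB hne') hb
    have m₁ := mul_le_mul_of_nonneg_left hA ha.le
    nlinarith
  have hΘx : inclusionInDoubleDual ℝ E u ∈ subdiff (fenchelConj g) x₂ := by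
    intro w
    have hw := hΘ w
    rw [hs₃] at hw
    rw [hs₁, map_sub, happ, happ, ← EReal.coe_add]
    rw [map_sub, happ, happ, ← EReal.coe_add] at hw
    have : w u - x₂ u + s₁ = w u - zc u + s₃ := by linarith
    rw [this]
    exact hw
  have hΘy : inclusionInDoubleDual ℝ E u ∈ subdiff (fenchelConj g) y₂ := by
    intro w
    have hw := hΘ w
    rw [hs₃] at hw
    rw [hs₂, map_sub, happ, happ, ← EReal.coe_add]
    rw [map_sub, happ, happ, ← EReal.coe_add] at hw
    have : w u - y₂ u + s₂ = w u - zc u + s₃ := by linarith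
    rw [this]
    exact hw
  have hxu : x₂ ∈ subdiff g u := (inclusion_mem_subdiff_conj_iff hprop hlsc hconv).mp hΘx
  have hyu : y₂ ∈ subdiff g u := (inclusion_mem_subdiff_conj_iff hprop hlsc hconv).mp hΘy
  exact hne (hsmooth u hxu hyu)

lemma lsc_sum {α : Type*} [TopologicalSpace α] {u v : α → EReal} (hu : LowerSemicontinuous u)
    (hv : LowerSemicontinuous v) (hub : ∀ x, u x ≠ ⊥) (hvb : ∀ x, v x ≠ ⊥) :
    LowerSemicontinuous (fun x => u x + v x) := by
  intro x c hc
  rcases ereal_cases c with rfl | rfl | ⟨r, rfl⟩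
  · apply Filter.Eventually.of_forall
    intro y
    simp only
    exact bot_lt_iff_ne_bot.mpr (fun h => (EReal.add_eq_bot_iff.mp h).elim (hub y) (hvb y))
  · exact absurd hc (by simp)
  · have hx : ∃ r₁ r₂ : ℝ, (r₁ : EReal) < u x ∧ (r₂ : EReal) < v x ∧ r ≤ r₁ + r₂ := by
      rcases ereal_cases (u x) with hb | ht | ⟨s, hs⟩
      · exact absurd hb (hub x)
      · rcases ereal_cases (v x) with hb' | ht' | ⟨t, hts⟩
        · exact absurd hb' (hvb x)
        · exact ⟨r/2, r/2, by rw [ht]; exact EReal.coe_lt_top _,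
            by rw [ht']; exact EReal.coe_lt_top _, by linarith⟩
        · refine ⟨r - (t-1), t-1, by rw [ht]; exact EReal.coe_lt_top _,
            by rw [hts]; exact_mod_cast (by linarith : t - 1 < t), by linarith⟩
      · rcases ereal_cases (v x) with hb' | ht' | ⟨t, hts⟩
        · exact absurd hb' (hvb x)
        · refine ⟨s - 1, r - (s-1), by rw [hs]; exact_mod_cast (by linarith : s - 1 < s),
            by rw [ht']; exact EReal.coe_lt_top _, by linarith⟩
        · have hrst : r < s + t := by
            have hc2 : (r : EReal) < u x + v x := hc
            rw [hs, hts, ← EReal.coe_add, EReal.coe_lt_coe_iff] at hc2; exact hc2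
          refine ⟨s - (s+t-r)/2, t - (s+t-r)/2,
            by rw [hs]; exact_mod_cast (by linarith : s - (s+t-r)/2 < s),
            by rw [hts]; exact_mod_cast (by linarith : t - (s+t-r)/2 < t), by linarith⟩
    obtain ⟨r₁, r₂, h1, h2, hle⟩ := hx
    filter_upwards [hu x _ h1, hv x _ h2] with y hy1 hy2
    calc (r : EReal) ≤ ((r₁ + r₂ : ℝ) : EReal) := by exact_mod_cast hle
      _ = (r₁ : EReal) + (r₂ : EReal) := EReal.coe_add _ _
      _ < u y + v y := EReal.add_lt_add hy1 hy2

section ProdSpace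

variable {E₁ E₂ : Type*} [NormedAddCommGroup E₁] [NormedSpace ℝ E₁]
  [NormedAddCommGroup E₂] [NormedSpace ℝ E₂]
variable {h₁ : E₁ → EReal} {h₂ : E₂ → EReal}

lemma sum_proper (hp₁ : ProperFn h₁) (hp₂ : ProperFn h₂) :
    ProperFn (fun p : E₁ × E₂ => h₁ p.1 + h₂ p.2) := by
  constructor
  · intro p h
    exact (EReal.add_eq_bot_iff.mp h).elim (hp₁.1 p.1) (hp₂.1 p.2)
  · obtain ⟨x₁, hx₁⟩ := hp₁.2
    obtain ⟨r₁, hr₁⟩ := ereal_real (hp₁.1 x₁) hx₁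
    obtain ⟨x₂, hx₂⟩ := hp₂.2
    obtain ⟨r₂, hr₂⟩ := ereal_real (hp₂.1 x₂) hx₂
    exact ⟨(x₁, x₂), by simp only [hr₁, hr₂, ← EReal.coe_add]; exact EReal.coe_ne_top _⟩

lemma sum_convex (hc₁ : ConvexFn h₁) (hc₂ : ConvexFn h₂) (hb₁ : ∀ x, h₁ x ≠ ⊥)
    (hb₂ : ∀ y, h₂ y ≠ ⊥) :
    ConvexFn (fun q : E₁ × E₂ => h₁ q.1 + h₂ q.2) := by
  apply convexFn_of_pos
  intro p q a b ha hb hab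
  simp only [Prod.smul_fst, Prod.smul_snd, Prod.fst_add, Prod.snd_add]
  calc h₁ (a • p.1 + b • q.1) + h₂ (a • p.2 + b • q.2)
      ≤ ((a : EReal) * h₁ p.1 + (b : EReal) * h₁ q.1)
        + ((a : EReal) * h₂ p.2 + (b : EReal) * h₂ q.2) :=
        add_le_add (hc₁ p.1 q.1 a b ha.le hb.le hab) (hc₂ p.2 q.2 a b ha.le hb.le hab)
    _ = ((a : EReal) * h₁ p.1 + (a : EReal) * h₂ p.2)
        + ((b : EReal) * h₁ q.1 + (b : EReal) * h₂ q.2) := add_add_add_comm _ _ _ _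
    _ = (a : EReal) * (h₁ p.1 + h₂ p.2) + (b : EReal) * (h₁ q.1 + h₂ q.2) := by
        rw [ereal_mul_add ha.le (hb₁ _) (hb₂ _), ereal_mul_add hb.le (hb₁ _) (hb₂ _)]

lemma mem_subdiff_sum_iff (hp₁ : ProperFn h₁) (hp₂ : ProperFn h₂) {p : E₁ × E₂}
    {ψ : StrongDual ℝ (E₁ × E₂)} :
    ψ ∈ subdiff (fun q : E₁ × E₂ => h₁ q.1 + h₂ q.2) p ↔
      ψ.comp (ContinuousLinearMap.inl ℝ E₁ E₂) ∈ subdiff h₁ p.1 ∧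
      ψ.comp (ContinuousLinearMap.inr ℝ E₁ E₂) ∈ subdiff h₂ p.2 := by
  obtain ⟨x₁, hx₁⟩ := hp₁.2
  obtain ⟨r₁0, hr₁0⟩ := ereal_real (hp₁.1 x₁) hx₁
  obtain ⟨x₂, hx₂⟩ := hp₂.2
  obtain ⟨r₂0, hr₂0⟩ := ereal_real (hp₂.1 x₂) hx₂
  rcases ereal_cases (h₁ p.1) with hb | ht | ⟨r₁, hr₁⟩
  · exact absurd hb (hp₁.1 p.1)
  · constructor
    · intro h
      exfalso
      have h0 : (ψ ((x₁, x₂) - p) : EReal) + (h₁ p.1 + h₂ p.2) ≤ h₁ x₁ + h₂ x₂ := h (x₁, x₂)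
      rw [ht, hr₁0, hr₂0, EReal.top_add_of_ne_bot (hp₂.1 p.2),
        EReal.add_top_of_ne_bot (EReal.coe_ne_bot _), ← EReal.coe_add] at h0
      exact absurd (top_le_iff.mp h0) (EReal.coe_ne_top _)
    · rintro ⟨hA, _⟩
      exfalso
      have h0 := hA x₁
      rw [ht, EReal.add_top_of_ne_bot (EReal.coe_ne_bot _), hr₁0] at h0
      exact absurd (top_le_iff.mp h0) (EReal.coe_ne_top _)
  · rcases ereal_cases (h₂ p.2) with hb | ht | ⟨r₂, hr₂⟩
    · exact absurd hb (hp₂.1 p.2)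
    · constructor
      · intro h
        exfalso
        have h0 : (ψ ((x₁, x₂) - p) : EReal) + (h₁ p.1 + h₂ p.2) ≤ h₁ x₁ + h₂ x₂ := h (x₁, x₂)
        rw [hr₁, ht, hr₁0, hr₂0, EReal.add_top_of_ne_bot (EReal.coe_ne_bot r₁), ← EReal.coe_add,
          EReal.add_top_of_ne_bot (EReal.coe_ne_bot _)] at h0
        exact absurd (top_le_iff.mp h0) (EReal.coe_ne_top _)
      · rintro ⟨_, hB⟩
        exfalso
        have h0 := hB x₂
        rw [ht, EReal.add_top_of_ne_bot (EReal.coe_ne_bot _), hr₂0] at h0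
        exact absurd (top_le_iff.mp h0) (EReal.coe_ne_top _)
    · constructor
      · intro h
        constructor
        · intro y₁
          have h0 : (ψ ((y₁, p.2) - p) : EReal) + (h₁ p.1 + h₂ p.2) ≤ h₁ y₁ + h₂ p.2 :=
            h (y₁, p.2)
          have hdiff : (y₁, p.2) - p = ContinuousLinearMap.inl ℝ E₁ E₂ (y₁ - p.1) := by
            simp [Prod.ext_iff]
          rw [hdiff, hr₁, hr₂] at h0
          rw [hr₁]
          rcases ereal_cases (h₁ y₁) with hb' | ht' | ⟨t, hts⟩
          · exact absurd hb' (hp₁.1 y₁)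
          · rw [ht']; exact le_top
          · rw [hts] at h0 ⊢
            rw [show ((ψ (ContinuousLinearMap.inl ℝ E₁ E₂ (y₁ - p.1)) : ℝ) : EReal)
              = ((ψ.comp (ContinuousLinearMap.inl ℝ E₁ E₂) (y₁ - p.1) : ℝ) : EReal) from rfl] at h0
            rw [← EReal.coe_add, ← EReal.coe_add, ← EReal.coe_add,
              EReal.coe_le_coe_iff] at h0
            rw [← EReal.coe_add, EReal.coe_le_coe_iff]
            linarith
        · intro y₂
          have h0 : (ψ ((p.1, y₂) - p) : EReal) + (h₁ p.1 + h₂ p.2) ≤ h₁ p.1 + h₂ y₂ :=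
            h (p.1, y₂)
          have hdiff : (p.1, y₂) - p = ContinuousLinearMap.inr ℝ E₁ E₂ (y₂ - p.2) := by
            simp [Prod.ext_iff]
          rw [hdiff, hr₁, hr₂] at h0
          rw [hr₂]
          rcases ereal_cases (h₂ y₂) with hb' | ht' | ⟨t, hts⟩
          · exact absurd hb' (hp₂.1 y₂)
          · rw [ht']; exact le_top
          · rw [hts] at h0 ⊢
            rw [show ((ψ (ContinuousLinearMap.inr ℝ E₁ E₂ (y₂ - p.2)) : ℝ) : EReal)
              = ((ψ.comp (ContinuousLinearMap.inr ℝ E₁ E₂) (y₂ - p.2) : ℝ) : EReal) from rfl] at h0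
            rw [← EReal.coe_add, ← EReal.coe_add, ← EReal.coe_add,
              EReal.coe_le_coe_iff] at h0
            rw [← EReal.coe_add, EReal.coe_le_coe_iff]
            linarith
      · rintro ⟨hA, hB⟩ q
        have hdecomp : q - p = ContinuousLinearMap.inl ℝ E₁ E₂ (q.1 - p.1)
            + ContinuousLinearMap.inr ℝ E₁ E₂ (q.2 - p.2) := by
          simp [Prod.ext_iff]
        have e0 : ψ (q - p) = ψ.comp (ContinuousLinearMap.inl ℝ E₁ E₂) (q.1 - p.1)
            + ψ.comp (ContinuousLinearMap.inr ℝ E₁ E₂) (q.2 - p.2) := by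
          rw [hdecomp, map_add]; rfl
        have e₁ := hA q.1
        have e₂ := hB q.2
        rw [hr₁] at e₁
        rw [hr₂] at e₂
        show (ψ (q - p) : EReal) + (h₁ p.1 + h₂ p.2) ≤ h₁ q.1 + h₂ q.2
        rw [e0, hr₁, hr₂]
        have hre : ((ψ.comp (ContinuousLinearMap.inl ℝ E₁ E₂) (q.1 - p.1)
            + ψ.comp (ContinuousLinearMap.inr ℝ E₁ E₂) (q.2 - p.2) : ℝ) : EReal)
            + ((r₁ : EReal) + (r₂ : EReal))
            = (((ψ.comp (ContinuousLinearMap.inl ℝ E₁ E₂) (q.1 - p.1) : ℝ) : EReal) + (r₁ : EReal))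
            + (((ψ.comp (ContinuousLinearMap.inr ℝ E₁ E₂) (q.2 - p.2) : ℝ) : EReal) + (r₂ : EReal)) := by
          rw [← EReal.coe_add, ← EReal.coe_add, ← EReal.coe_add, ← EReal.coe_add,
            ← EReal.coe_add, EReal.coe_eq_coe_iff]
          ring
        rw [hre]
        exact add_le_add e₁ e₂

lemma subdiff_sum_subsingleton (hp₁ : ProperFn h₁) (hp₂ : ProperFn h₂)
    (hs₁ : ∀ x, (subdiff h₁ x).Subsingleton) (hs₂ : ∀ x, (subdiff h₂ x).Subsingleton) :
    ∀ p, (subdiff (fun q : E₁ × E₂ => h₁ q.1 + h₂ q.2) p).Subsingleton := by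
  intro p ψ hψ ψ' hψ'
  rw [mem_subdiff_sum_iff hp₁ hp₂] at hψ hψ'
  have e1 := hs₁ p.1 hψ.1 hψ'.1
  have e2 := hs₂ p.2 hψ.2 hψ'.2
  apply ContinuousLinearMap.ext
  rintro ⟨q₁, q₂⟩
  have hq : (q₁, q₂) = ContinuousLinearMap.inl ℝ E₁ E₂ q₁
      + ContinuousLinearMap.inr ℝ E₁ E₂ q₂ := by simp [Prod.ext_iff]
  rw [hq, map_add, map_add]
  have c1 : ψ (ContinuousLinearMap.inl ℝ E₁ E₂ q₁) = ψ' (ContinuousLinearMap.inl ℝ E₁ E₂ q₁) :=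
    DFunLike.congr_fun e1 q₁
  have c2 : ψ (ContinuousLinearMap.inr ℝ E₁ E₂ q₂) = ψ' (ContinuousLinearMap.inr ℝ E₁ E₂ q₂) :=
    DFunLike.congr_fun e2 q₂
  rw [c1, c2]

lemma norm_le_comp_add {ψ : StrongDual ℝ (E₁ × E₂)} :
    ‖ψ‖ ≤ ‖ψ.comp (ContinuousLinearMap.inl ℝ E₁ E₂)‖
      + ‖ψ.comp (ContinuousLinearMap.inr ℝ E₁ E₂)‖ := by
  refine ContinuousLinearMap.opNorm_le_bound _ (by positivity) ?_
  rintro ⟨q₁, q₂⟩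
  have hq : ψ (q₁, q₂) = ψ.comp (ContinuousLinearMap.inl ℝ E₁ E₂) q₁
      + ψ.comp (ContinuousLinearMap.inr ℝ E₁ E₂) q₂ := by
    rw [show ((q₁, q₂) : E₁ × E₂) = ContinuousLinearMap.inl ℝ E₁ E₂ q₁
      + ContinuousLinearMap.inr ℝ E₁ E₂ q₂ from by simp [Prod.ext_iff], map_add]
    rfl
  rw [hq]
  have b1 := (ψ.comp (ContinuousLinearMap.inl ℝ E₁ E₂)).le_opNorm q₁
  have b2 := (ψ.comp (ContinuousLinearMap.inr ℝ E₁ E₂)).le_opNorm q₂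
  have n1 : ‖q₁‖ ≤ ‖((q₁, q₂) : E₁ × E₂)‖ := by
    simpa using norm_fst_le ((q₁, q₂) : E₁ × E₂)
  have n2 : ‖q₂‖ ≤ ‖((q₁, q₂) : E₁ × E₂)‖ := by
    simpa using norm_snd_le ((q₁, q₂) : E₁ × E₂)
  calc ‖ψ.comp (ContinuousLinearMap.inl ℝ E₁ E₂) q₁
      + ψ.comp (ContinuousLinearMap.inr ℝ E₁ E₂) q₂‖
      ≤ ‖ψ.comp (ContinuousLinearMap.inl ℝ E₁ E₂) q₁‖
        + ‖ψ.comp (ContinuousLinearMap.inr ℝ E₁ E₂) q₂‖ := norm_add_le _ _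
    _ ≤ ‖ψ.comp (ContinuousLinearMap.inl ℝ E₁ E₂)‖ * ‖q₁‖
        + ‖ψ.comp (ContinuousLinearMap.inr ℝ E₁ E₂)‖ * ‖q₂‖ := add_le_add b1 b2
    _ ≤ (‖ψ.comp (ContinuousLinearMap.inl ℝ E₁ E₂)‖
        + ‖ψ.comp (ContinuousLinearMap.inr ℝ E₁ E₂)‖) * ‖((q₁, q₂) : E₁ × E₂)‖ := by
        have := norm_nonneg (ψ.comp (ContinuousLinearMap.inl ℝ E₁ E₂))
        have := norm_nonneg (ψ.comp (ContinuousLinearMap.inr ℝ E₁ E₂))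
        nlinarith

lemma subdiff_sum_locBounded (hp₁ : ProperFn h₁) (hp₂ : ProperFn h₂)
    (hl₁ : LocBoundedOnDom (subdiff h₁)) (hl₂ : LocBoundedOnDom (subdiff h₂)) :
    LocBoundedOnDom (subdiff (fun q : E₁ × E₂ => h₁ q.1 + h₂ q.2)) := by
  rintro p ⟨ψ₀, hψ₀⟩
  rw [mem_subdiff_sum_iff hp₁ hp₂] at hψ₀
  obtain ⟨ε₁, hε₁, C₁, hC₁⟩ := hl₁ p.1 ⟨_, hψ₀.1⟩
  obtain ⟨ε₂, hε₂, C₂, hC₂⟩ := hl₂ p.2 ⟨_, hψ₀.2⟩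
  refine ⟨min ε₁ ε₂, lt_min hε₁ hε₂, C₁ + C₂, ?_⟩
  intro q hq ψ hψ
  rw [mem_subdiff_sum_iff hp₁ hp₂] at hψ
  have hq1 : ‖q.1 - p.1‖ < ε₁ := by
    have := norm_fst_le (q - p)
    simp only [Prod.fst_sub] at this
    exact lt_of_le_of_lt this (lt_of_lt_of_le hq (min_le_left _ _))
  have hq2 : ‖q.2 - p.2‖ < ε₂ := by
    have := norm_snd_le (q - p)
    simp only [Prod.snd_sub] at this
    exact lt_of_le_of_lt this (lt_of_lt_of_le hq (min_le_right _ _))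
  exact le_trans norm_le_comp_add
    (add_le_add (hC₁ q.1 hq1 _ hψ.1) (hC₂ q.2 hq2 _ hψ.2))

lemma iSup_prod_add {A : E₁ → EReal} {B : E₂ → EReal} :
    ⨆ p : E₁ × E₂, (A p.1 + B p.2) = (⨆ x, A x) + (⨆ y, B y) := by
  apply le_antisymm
  · exact iSup_le fun p => add_le_add (le_iSup A p.1) (le_iSup B p.2)
  · apply EReal.add_le_of_forall_lt
    intro a' ha' b' hb'
    rw [lt_iSup_iff] at ha' hb'
    obtain ⟨x, hx⟩ := ha'
    obtain ⟨y, hy⟩ := hb'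
    exact le_trans (EReal.add_lt_add hx hy).le
      (le_iSup (fun p : E₁ × E₂ => A p.1 + B p.2) (x, y))

lemma fenchelConj_sum (hb₁ : ∀ x, h₁ x ≠ ⊥) (hb₂ : ∀ y, h₂ y ≠ ⊥) (ψ : StrongDual ℝ (E₁ × E₂)) :
    fenchelConj (fun q : E₁ × E₂ => h₁ q.1 + h₂ q.2) ψ =
      fenchelConj h₁ (ψ.comp (ContinuousLinearMap.inl ℝ E₁ E₂))
      + fenchelConj h₂ (ψ.comp (ContinuousLinearMap.inr ℝ E₁ E₂)) := by
  rw [fenchelConj, fenchelConj, fenchelConj, ← iSup_prod_add]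
  congr 1
  funext p
  have hψp : (ψ p : ℝ) = ψ.comp (ContinuousLinearMap.inl ℝ E₁ E₂) p.1
      + ψ.comp (ContinuousLinearMap.inr ℝ E₁ E₂) p.2 := by
    have hp' : ψ p = ψ (ContinuousLinearMap.inl ℝ E₁ E₂ p.1
        + ContinuousLinearMap.inr ℝ E₁ E₂ p.2) := by
      congr 1
      simp [Prod.ext_iff]
    rw [hp', map_add]
    rfl
  rw [hψp]
  rcases ereal_cases (h₁ p.1) with hb | ht | ⟨r, hr⟩
  · exact absurd hb (hb₁ p.1)
  · rw [ht, EReal.top_add_of_ne_bot (hb₂ p.2), EReal.sub_top, EReal.sub_top, EReal.bot_add]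
  · rcases ereal_cases (h₂ p.2) with hb' | ht' | ⟨s, hs⟩
    · exact absurd hb' (hb₂ p.2)
    · rw [hr, ht', EReal.add_top_of_ne_bot (EReal.coe_ne_bot r), EReal.sub_top, EReal.sub_top,
        EReal.add_bot]
    · rw [hr, hs, ← EReal.coe_add, ← EReal.coe_sub, ← EReal.coe_sub, ← EReal.coe_sub,
        ← EReal.coe_add, EReal.coe_eq_coe_iff]
      ring

end ProdSpace

lemma lsc_comp_cont {α β : Type*} [TopologicalSpace α] [TopologicalSpace β] {u : α → EReal}
    {m : β → α} (hu : LowerSemicontinuous u) (hm : Continuous m) :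
    LowerSemicontinuous (fun x => u (m x)) :=
  fun x c hc => (hm.continuousAt).eventually (hu (m x) c hc)

section DoubleDualTransport

variable {E : Type*} [NormedAddCommGroup E] [NormedSpace ℝ E]

instance legAuxBidualNS : NormedSpace ℝ (StrongDual ℝ (StrongDual ℝ E)) := inferInstance
instance legAuxBidualNG : NormedAddCommGroup (StrongDual ℝ (StrongDual ℝ E)) := inferInstance

lemma inclusion_norm_eq (y : E) : ‖inclusionInDoubleDual ℝ E y‖ = ‖y‖ :=
  (inclusionInDoubleDualLi ℝ (E := E)).norm_map y

lemma comp_inclusion_norm (hsurj : Function.Surjective (inclusionInDoubleDual ℝ E))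
    (Ξ : StrongDual ℝ (StrongDual ℝ (StrongDual ℝ E))) : ‖Ξ.comp (inclusionInDoubleDual ℝ E)‖ = ‖Ξ‖ := by
  apply le_antisymm
  · calc ‖Ξ.comp (inclusionInDoubleDual ℝ E)‖
        ≤ ‖Ξ‖ * ‖inclusionInDoubleDual ℝ E‖ := ContinuousLinearMap.opNorm_comp_le _ _
    _ ≤ ‖Ξ‖ * 1 := mul_le_mul_of_nonneg_left (inclusionInDoubleDual_norm_le ℝ E) (norm_nonneg _)
    _ = ‖Ξ‖ := mul_one _
  · refine ContinuousLinearMap.opNorm_le_bound _ (norm_nonneg _) ?_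
    intro φ
    obtain ⟨y, rfl⟩ := hsurj φ
    calc ‖Ξ (inclusionInDoubleDual ℝ E y)‖
        = ‖Ξ.comp (inclusionInDoubleDual ℝ E) y‖ := rfl
      _ ≤ ‖Ξ.comp (inclusionInDoubleDual ℝ E)‖ * ‖y‖ := ContinuousLinearMap.le_opNorm _ _
      _ = ‖Ξ.comp (inclusionInDoubleDual ℝ E)‖ * ‖inclusionInDoubleDual ℝ E y‖ := by
          rw [inclusion_norm_eq]

lemma mem_subdiff_biconj_iff {g : E → EReal} (hprop : ProperFn g)
    (hlsc : LowerSemicontinuous g) (hconv : ConvexFn g)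
    (hsurj : Function.Surjective (inclusionInDoubleDual ℝ E)) {y : E}
    {Ξ : StrongDual ℝ (StrongDual ℝ (StrongDual ℝ E))} :
    Ξ ∈ subdiff (fenchelConj (fenchelConj g)) (inclusionInDoubleDual ℝ E y) ↔
      Ξ.comp (inclusionInDoubleDual ℝ E) ∈ subdiff g y := by
  constructor
  · intro h y'
    have h0 := h (inclusionInDoubleDual ℝ E y')
    rw [biconj hprop hlsc hconv, biconj hprop hlsc hconv, ← map_sub] at h0
    exact h0
  · intro h φ
    obtain ⟨y', rfl⟩ := hsurj φ
    rw [biconj hprop hlsc hconv, biconj hprop hlsc hconv, ← map_sub]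
    exact h y'

lemma subdiff_biconj_locBounded {g : E → EReal} (hprop : ProperFn g)
    (hlsc : LowerSemicontinuous g) (hconv : ConvexFn g)
    (hsurj : Function.Surjective (inclusionInDoubleDual ℝ E))
    (hl : LocBoundedOnDom (subdiff g)) :
    LocBoundedOnDom (subdiff (fenchelConj (fenchelConj g))) := by
  rintro φ ⟨Ξ₀, hΞ₀⟩
  obtain ⟨y, rfl⟩ := hsurj φ
  rw [mem_subdiff_biconj_iff hprop hlsc hconv hsurj] at hΞ₀
  obtain ⟨ε, hε, C, hC⟩ := hl y ⟨_, hΞ₀⟩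
  refine ⟨ε, hε, C, ?_⟩
  intro φ' hφ' Ξ hΞ
  obtain ⟨y', rfl⟩ := hsurj φ'
  rw [mem_subdiff_biconj_iff hprop hlsc hconv hsurj] at hΞ
  rw [← map_sub, inclusion_norm_eq] at hφ'
  have hb := hC y' hφ' _ hΞ
  rw [comp_inclusion_norm hsurj] at hb
  exact hb

end DoubleDualTransport

section ConjProd

variable {E₁ E₂ : Type*} [NormedAddCommGroup E₁] [NormedSpace ℝ E₁]
  [NormedAddCommGroup E₂] [NormedSpace ℝ E₂]
variable {h₁ : E₁ → EReal} {h₂ : E₂ → EReal}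

set_option maxHeartbeats 4000000 in
lemma subdiff_conj_sum_locBounded (hb₁ : ∀ x, h₁ x ≠ ⊥) (hb₂ : ∀ y, h₂ y ≠ ⊥)
    (hcp₁ : ProperFn (fenchelConj h₁)) (hcp₂ : ProperFn (fenchelConj h₂))
    (hl₁ : LocBoundedOnDom (subdiff (fenchelConj h₁)))
    (hl₂ : LocBoundedOnDom (subdiff (fenchelConj h₂))) :
    LocBoundedOnDom (subdiff (fenchelConj (fun q : E₁ × E₂ => h₁ q.1 + h₂ q.2))) := by
  have hKl : LocBoundedOnDom
      (subdiff (fun q : StrongDual ℝ E₁ × StrongDual ℝ E₂ => fenchelConj h₁ q.1 + fenchelConj h₂ q.2)) :=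
    subdiff_sum_locBounded hcp₁ hcp₂ hl₁ hl₂
  obtain ⟨eL, heL⟩ : ∃ e : StrongDual ℝ (E₁ × E₂) →L[ℝ] StrongDual ℝ E₁ × StrongDual ℝ E₂,
      e = ((ContinuousLinearMap.compL ℝ E₁ (E₁ × E₂) ℝ).flip
        (ContinuousLinearMap.inl ℝ E₁ E₂)).prod
        ((ContinuousLinearMap.compL ℝ E₂ (E₁ × E₂) ℝ).flip
          (ContinuousLinearMap.inr ℝ E₁ E₂)) := ⟨_, rfl⟩
  obtain ⟨cL, hcL⟩ : ∃ c : StrongDual ℝ E₁ × StrongDual ℝ E₂ →L[ℝ] StrongDual ℝ (E₁ × E₂),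
      c = ((ContinuousLinearMap.compL ℝ (E₁ × E₂) E₁ ℝ).flip
        (ContinuousLinearMap.fst ℝ E₁ E₂)).coprod
        ((ContinuousLinearMap.compL ℝ (E₁ × E₂) E₂ ℝ).flip
          (ContinuousLinearMap.snd ℝ E₁ E₂)) := ⟨_, rfl⟩
  have heL1 : ∀ ψ : StrongDual ℝ (E₁ × E₂), (eL ψ).1 = ψ.comp (ContinuousLinearMap.inl ℝ E₁ E₂) := by
    intro ψ
    simp only [heL, ContinuousLinearMap.prod_apply, ContinuousLinearMap.flip_apply,
      ContinuousLinearMap.compL_apply]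
  have heL2 : ∀ ψ : StrongDual ℝ (E₁ × E₂), (eL ψ).2 = ψ.comp (ContinuousLinearMap.inr ℝ E₁ E₂) := by
    intro ψ
    simp only [heL, ContinuousLinearMap.prod_apply, ContinuousLinearMap.flip_apply,
      ContinuousLinearMap.compL_apply]
  have hcL_app : ∀ (q : StrongDual ℝ E₁ × StrongDual ℝ E₂) (v : E₁ × E₂), cL q v = q.1 v.1 + q.2 v.2 := by
    intro q v
    simp only [hcL, ContinuousLinearMap.coprod_apply, ContinuousLinearMap.flip_apply,
      ContinuousLinearMap.compL_apply, ContinuousLinearMap.comp_apply,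
      ContinuousLinearMap.add_apply, ContinuousLinearMap.coe_fst', ContinuousLinearMap.coe_snd']
  have hce : ∀ ψ : StrongDual ℝ (E₁ × E₂), cL (eL ψ) = ψ := by
    intro ψ
    apply ContinuousLinearMap.ext
    rintro ⟨q₁, q₂⟩
    rw [hcL_app, heL1, heL2]
    simp only [ContinuousLinearMap.comp_apply, ContinuousLinearMap.inl_apply,
      ContinuousLinearMap.inr_apply]
    rw [← map_add]
    congr 1
    simp [Prod.ext_iff]
  have hec : ∀ q : StrongDual ℝ E₁ × StrongDual ℝ E₂, eL (cL q) = q := by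
    rintro ⟨q₁, q₂⟩
    have e1 : (eL (cL (q₁, q₂))).1 = q₁ := by
      apply ContinuousLinearMap.ext
      intro v
      rw [heL1, ContinuousLinearMap.comp_apply, hcL_app]
      simp
    have e2 : (eL (cL (q₁, q₂))).2 = q₂ := by
      apply ContinuousLinearMap.ext
      intro v
      rw [heL2, ContinuousLinearMap.comp_apply, hcL_app]
      simp
    exact Prod.ext e1 e2
  have heK : ∀ ψ : StrongDual ℝ (E₁ × E₂),
      fenchelConj (fun q : E₁ × E₂ => h₁ q.1 + h₂ q.2) ψ
        = fenchelConj h₁ (eL ψ).1 + fenchelConj h₂ (eL ψ).2 := by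
    intro ψ
    rw [fenchelConj_sum hb₁ hb₂, heL1, heL2]
  have hsub : ∀ (ψ : StrongDual ℝ (E₁ × E₂)) (Φ : StrongDual ℝ (StrongDual ℝ (E₁ × E₂))),
      Φ ∈ subdiff (fenchelConj (fun q : E₁ × E₂ => h₁ q.1 + h₂ q.2)) ψ →
      Φ.comp cL ∈ subdiff
        (fun q : StrongDual ℝ E₁ × StrongDual ℝ E₂ => fenchelConj h₁ q.1 + fenchelConj h₂ q.2) (eL ψ) := by
    intro ψ Φ h q
    have h0 := h (cL q)
    rw [heK, heK, hec] at h0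
    have harg : (Φ.comp cL) (q - eL ψ) = Φ (cL q - ψ) := by
      rw [ContinuousLinearMap.comp_apply, map_sub, hce]
    rw [harg]
    exact h0
  rintro ψ₀ ⟨Φ₀, hΦ₀⟩
  obtain ⟨ε, hε, C, hC⟩ := hKl (eL ψ₀) ⟨_, hsub _ _ hΦ₀⟩
  have hC0 : 0 ≤ C := by
    refine le_trans (norm_nonneg (Φ₀.comp cL)) (hC (eL ψ₀) ?_ _ (hsub _ _ hΦ₀))
    simpa using hε
  refine ⟨ε / (‖eL‖ + 1), by positivity, C * (‖eL‖ + 1), ?_⟩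
  intro ψ hψ Φ hΦ
  have h1 : ‖eL ψ - eL ψ₀‖ < ε := by
    rw [← map_sub]
    have := eL.le_opNorm (ψ - ψ₀)
    have hεn : ‖eL‖ * ‖ψ - ψ₀‖ < ε := by
      have hpos : (0:ℝ) < ‖eL‖ + 1 := by positivity
      have h2 : ‖ψ - ψ₀‖ * (‖eL‖ + 1) < ε := by
        rw [← lt_div_iff₀ hpos]; exact hψ
      nlinarith [norm_nonneg (ψ - ψ₀), norm_nonneg eL]
    linarith
  have h2 := hC _ h1 _ (hsub _ _ hΦ)
  have h3 : ‖Φ‖ ≤ ‖Φ.comp cL‖ * ‖eL‖ := by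
    refine ContinuousLinearMap.opNorm_le_bound _ (by positivity) (fun ψ' => ?_)
    have hval : Φ ψ' = (Φ.comp cL) (eL ψ') := by
      rw [ContinuousLinearMap.comp_apply, hce]
    rw [hval]
    calc ‖(Φ.comp cL) (eL ψ')‖ ≤ ‖Φ.comp cL‖ * ‖eL ψ'‖ :=
          ContinuousLinearMap.le_opNorm _ _
      _ ≤ ‖Φ.comp cL‖ * (‖eL‖ * ‖ψ'‖) :=
          mul_le_mul_of_nonneg_left (eL.le_opNorm ψ') (norm_nonneg (Φ.comp cL))
      _ = ‖Φ.comp cL‖ * ‖eL‖ * ‖ψ'‖ := by ring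
  have h4 : ‖Φ.comp cL‖ * ‖eL‖ ≤ C * (‖eL‖ + 1) := by
    nlinarith [norm_nonneg eL, norm_nonneg (Φ.comp cL)]
  linarith

end ConjProd

section SumStrict

variable {E₁ E₂ : Type*} [NormedAddCommGroup E₁] [NormedSpace ℝ E₁]
  [NormedAddCommGroup E₂] [NormedSpace ℝ E₂]
variable {h₁ : E₁ → EReal} {h₂ : E₂ → EReal}

lemma sum_strictConvexOn (hp₁ : ProperFn h₁) (hp₂ : ProperFn h₂)
    (hc₁ : ConvexFn h₁) (hc₂ : ConvexFn h₂)
    (hst₁ : ∀ S : Set E₁, S ⊆ {x | (subdiff h₁ x).Nonempty} → Convex ℝ S →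
      StrictConvexFnOn h₁ S)
    (hst₂ : ∀ S : Set E₂, S ⊆ {x | (subdiff h₂ x).Nonempty} → Convex ℝ S →
      StrictConvexFnOn h₂ S) :
    ∀ S : Set (E₁ × E₂),
      S ⊆ {p | (subdiff (fun q : E₁ × E₂ => h₁ q.1 + h₂ q.2) p).Nonempty} →
      Convex ℝ S → StrictConvexFnOn (fun q : E₁ × E₂ => h₁ q.1 + h₂ q.2) S := by
  intro S hS hSc p hp q hq hne a b ha hb hab
  have hdom : ∀ x ∈ S, (subdiff h₁ x.1).Nonempty ∧ (subdiff h₂ x.2).Nonempty := by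
    intro x hx
    obtain ⟨ψ, hψ⟩ := hS hx
    rw [mem_subdiff_sum_iff hp₁ hp₂] at hψ
    exact ⟨⟨_, hψ.1⟩, ⟨_, hψ.2⟩⟩
  obtain ⟨r₁, hr₁⟩ := subdiff_real hp₁ (hdom p hp).1
  obtain ⟨r₂, hr₂⟩ := subdiff_real hp₂ (hdom p hp).2
  obtain ⟨s₁, hs₁⟩ := subdiff_real hp₁ (hdom q hq).1
  obtain ⟨s₂, hs₂⟩ := subdiff_real hp₂ (hdom q hq).2
  show h₁ (a • p + b • q).1 + h₂ (a • p + b • q).2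
    < (a : EReal) * (h₁ p.1 + h₂ p.2) + (b : EReal) * (h₁ q.1 + h₂ q.2)
  simp only [Prod.fst_add, Prod.snd_add, Prod.smul_fst, Prod.smul_snd]
  rw [hr₁, hr₂, hs₁, hs₂, ← EReal.coe_add, ← EReal.coe_add, ← EReal.coe_mul, ← EReal.coe_mul,
    ← EReal.coe_add]
  rcases ne_or_eq p.1 q.1 with h1ne | h1eq
  · have hS₁ : Prod.fst '' S ⊆ {x | (subdiff h₁ x).Nonempty} := by
      rintro _ ⟨x, hx, rfl⟩; exact (hdom x hx).1
    have hs := hst₁ _ hS₁ (hSc.linear_image (LinearMap.fst ℝ E₁ E₂)) p.1 ⟨p, hp, rfl⟩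
      q.1 ⟨q, hq, rfl⟩ h1ne a b ha hb hab
    rw [hr₁, hs₁, ← EReal.coe_mul, ← EReal.coe_mul, ← EReal.coe_add] at hs
    have hcv := hc₂ p.2 q.2 a b ha.le hb.le hab
    rw [hr₂, hs₂, ← EReal.coe_mul, ← EReal.coe_mul, ← EReal.coe_add] at hcv
    obtain ⟨t₁, ht₁⟩ : ∃ t : ℝ, h₁ (a • p.1 + b • q.1) = (t : EReal) := by
      refine ereal_real (hp₁.1 _) (fun htop => ?_)
      rw [htop] at hs
      exact absurd hs (by simp)
    obtain ⟨t₂, ht₂⟩ : ∃ t : ℝ, h₂ (a • p.2 + b • q.2) = (t : EReal) := by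
      refine ereal_real (hp₂.1 _) (fun htop => ?_)
      rw [htop, top_le_iff] at hcv
      exact absurd hcv.symm (EReal.coe_ne_top _).symm
    rw [ht₁, EReal.coe_lt_coe_iff] at hs
    rw [ht₂, EReal.coe_le_coe_iff] at hcv
    rw [ht₁, ht₂, ← EReal.coe_add, EReal.coe_lt_coe_iff]
    linarith
  · have h2ne : p.2 ≠ q.2 := fun h2 => hne (Prod.ext h1eq h2)
    have hS₂ : Prod.snd '' S ⊆ {x | (subdiff h₂ x).Nonempty} := by
      rintro _ ⟨x, hx, rfl⟩; exact (hdom x hx).2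
    have hs := hst₂ _ hS₂ (hSc.linear_image (LinearMap.snd ℝ E₁ E₂)) p.2 ⟨p, hp, rfl⟩
      q.2 ⟨q, hq, rfl⟩ h2ne a b ha hb hab
    rw [hr₂, hs₂, ← EReal.coe_mul, ← EReal.coe_mul, ← EReal.coe_add] at hs
    have hcv := hc₁ p.1 q.1 a b ha.le hb.le hab
    rw [hr₁, hs₁, ← EReal.coe_mul, ← EReal.coe_mul, ← EReal.coe_add] at hcv
    obtain ⟨t₂, ht₂⟩ : ∃ t : ℝ, h₂ (a • p.2 + b • q.2) = (t : EReal) := by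
      refine ereal_real (hp₂.1 _) (fun htop => ?_)
      rw [htop] at hs
      exact absurd hs (by simp)
    obtain ⟨t₁, ht₁⟩ : ∃ t : ℝ, h₁ (a • p.1 + b • q.1) = (t : EReal) := by
      refine ereal_real (hp₁.1 _) (fun htop => ?_)
      rw [htop, top_le_iff] at hcv
      exact absurd hcv.symm (EReal.coe_ne_top _).symm
    rw [ht₂, EReal.coe_lt_coe_iff] at hs
    rw [ht₁, EReal.coe_le_coe_iff] at hcv
    rw [ht₁, ht₂, ← EReal.coe_add, EReal.coe_lt_coe_iff]
    linarith

end SumStrict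

end LegAux

/-- If `f` and `g` are Legendre, then `F(x,y*) = f(x) + g*(y*)` is a
Legendre function on `X × Y*`. -/
theorem legendre_product
    (X Y : Type*) [NormedAddCommGroup X] [NormedSpace ℝ X] [CompleteSpace X]
    [NormedAddCommGroup Y] [NormedSpace ℝ Y] [CompleteSpace Y]
    (hX : Function.Surjective (NormedSpace.inclusionInDoubleDual ℝ X))
    (hY : Function.Surjective (NormedSpace.inclusionInDoubleDual ℝ Y))
    (f : X → EReal) (g : Y → EReal)
    (hf : IsLegendreFn f) (hg : IsLegendreFn g) :
    IsLegendreFn (fun p : X × StrongDual ℝ Y => f p.1 + fenchelConj g p.2) := by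
  obtain ⟨hfP, hfL, hfC, hfSm, hfSt⟩ := hf
  obtain ⟨hgP, hgL, hgC, hgSm, hgSt⟩ := hg
  have hgcP : ProperFn (fenchelConj g) := LegAux.fenchelConj_proper hgP hgL hgC
  have hgcL : LowerSemicontinuous (fenchelConj g) := LegAux.fenchelConj_lsc g
  have hgcC : ConvexFn (fenchelConj g) := LegAux.fenchelConj_convex hgP.1
  have hfcP : ProperFn (fenchelConj f) := LegAux.fenchelConj_proper hfP hfL hfC
  have hgccP : ProperFn (fenchelConj (fenchelConj g)) :=
    LegAux.fenchelConj_proper hgcP hgcL hgcC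
  refine ⟨LegAux.sum_proper hfP hgcP, ?_, LegAux.sum_convex hfC hgcC hfP.1 hgcP.1,
    ⟨?_, ?_⟩, ⟨?_, ?_⟩⟩
  · exact LegAux.lsc_sum (LegAux.lsc_comp_cont hfL continuous_fst)
      (LegAux.lsc_comp_cont hgcL continuous_snd) (fun p => hfP.1 p.1) (fun p => hgcP.1 p.2)
  · exact LegAux.subdiff_sum_locBounded hfP hgcP hfSm.1 hgSt.1
  · exact LegAux.subdiff_sum_subsingleton hfP hgcP hfSm.2
      (LegAux.subdiff_conj_subsingleton hgP hgL hgC hY hgSt.2)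
  · exact LegAux.subdiff_conj_sum_locBounded hfP.1 hgcP.1 hfcP hgccP hfSt.1
      (LegAux.subdiff_biconj_locBounded hgP hgL hgC hY hgSm.1)
  · exact LegAux.sum_strictConvexOn hfP hgcP hfC hgcC hfSt.2
      (LegAux.conj_strictConvexOn hgP hgL hgC hY hgSm.2)

end
end
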